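/- If {γ_k} is a classical multiplier sequence and there exist integers n > m ≥ 0 with γ_m ≠ 0 and γ_n = 0, then γ_k = 0 for all k ≥ n. -/

import Mathlib

open Polynomial

/-- A real polynomial has only real zeros: either it is the zero polynomial
(by convention), or every complex root is real. -/
def RealRooted (p : Polynomial ℝ) : Prop :=
  p = 0 ∨ ∀ z : ℂ, Polynomial.aeval z p = 0 → z.im = 0

/-- A simple set of polynomials: deg b_k = k for all k. -/
def SimpleSet (B : ℕ → Polynomial ℝ) : Prop :=
  ∀ k, (B k).degree = (k : ℕ)

/-- γ is a B-multiplier sequence: applying γ to B-expansion coefficients of any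
polynomial with only real zeros yields a polynomial with only real zeros. -/
def IsMultSeq (B : ℕ → Polynomial ℝ) (γ : ℕ → ℝ) : Prop :=
  ∀ (n : ℕ) (a : ℕ → ℝ),
    RealRooted (∑ k ∈ Finset.range (n + 1), Polynomial.C (a k) * B k) →
    RealRooted (∑ k ∈ Finset.range (n + 1), Polynomial.C (a k * γ k) * B k)

/-- A classical multiplier sequence: multiplier sequence for the standard basis. -/
def ClassicalMS (γ : ℕ → ℝ) : Prop :=
  IsMultSeq (fun k => Polynomial.X ^ k) γ

/-!
Let `m₀` be the last index below `n` and `k₀` the first index from `n` on at which `γ` does not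
vanish, so `d = k₀ - m₀ ≥ 2` and `γ` vanishes strictly between them. Applying `γ` to the
real-rooted polynomial `X ^ m₀ * (X + 1) ^ (d - 1) * (X + t)`, `t = γ k₀ / γ m₀`, keeps only its
extreme coefficients and gives `γ k₀ * X ^ m₀ * (1 + X ^ d)`, which has the non-real root
`exp (π i / d)`.
-/

namespace RealRooted

theorem mul {p q : ℝ[X]} (hp : RealRooted p) (hq : RealRooted q) : RealRooted (p * q) := by
  rcases hp with rfl | hp
  · exact Or.inl (zero_mul q)
  rcases hq with rfl | hq
  · exact Or.inl (mul_zero p)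
  refine Or.inr fun z hz => ?_
  rw [map_mul, mul_eq_zero] at hz
  exact hz.elim (hp z) (hq z)

theorem pow {p : ℝ[X]} (hp : RealRooted p) (e : ℕ) : RealRooted (p ^ e) := by
  induction e with
  | zero => exact Or.inr fun z hz => by simp at hz
  | succ e ih => rw [pow_succ]; exact ih.mul hp

end RealRooted

theorem realRooted_X_add_C (t : ℝ) : RealRooted (X + C t) := by
  refine Or.inr fun z hz => ?_
  rw [map_add, aeval_X, aeval_C, add_eq_zero_iff_eq_neg] at hz
  simp [hz]

theorem realRooted_X : RealRooted (X : ℝ[X]) := by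
  simpa using realRooted_X_add_C 0

theorem Complex.exists_pow_eq_neg_one_im_ne_zero {d : ℕ} (hd : 2 ≤ d) :
    ∃ z : ℂ, z ^ d = -1 ∧ z.im ≠ 0 := by
  have hdR : (0 : ℝ) < d := by positivity
  have hdC : (d : ℂ) ≠ 0 := by exact_mod_cast hdR.ne'
  refine ⟨Complex.exp (↑(Real.pi / d) * Complex.I), ?_, ?_⟩
  · rw [← Complex.exp_nat_mul, ← Complex.exp_pi_mul_I]
    congr 1
    push_cast
    field_simp
  · rw [Complex.exp_ofReal_mul_I_im]
    refine (Real.sin_pos_of_pos_of_lt_pi (by positivity) ?_).ne'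
    rw [div_lt_iff₀ hdR]
    have : (2 : ℝ) ≤ d := by exact_mod_cast hd
    nlinarith [Real.pi_pos]

theorem not_realRooted_C_mul_X_pow_mul_one_add_X_pow {a : ℝ} (ha : a ≠ 0) (m : ℕ) {d : ℕ}
    (hd : 2 ≤ d) : ¬ RealRooted (C a * X ^ m * (1 + X ^ d)) := by
  obtain ⟨z, hzd, hz⟩ := Complex.exists_pow_eq_neg_one_im_ne_zero hd
  rintro (h | h)
  · simpa [ha] using congrArg (eval 1) h
  · exact hz (h z (by simp [hzd]))

theorem ClassicalMS.realRooted_of_coeff_eq {γ : ℕ → ℝ} (hγ : ClassicalMS γ) {p q : ℝ[X]}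
    (hp : RealRooted p) (hq : ∀ j, q.coeff j = γ j * p.coeff j) : RealRooted q := by
  have hqdeg : q.natDegree < p.natDegree + 1 :=
    Nat.lt_succ_of_le <| natDegree_le_iff_coeff_eq_zero.2 fun j hj => by
      rw [hq, coeff_eq_zero_of_natDegree_lt (by exact_mod_cast hj), mul_zero]
  have := hγ p.natDegree p.coeff (by rwa [← as_sum_range_C_mul_X_pow])
  rw [q.as_sum_range_C_mul_X_pow' hqdeg]
  convert this using 4 with j
  rw [hq, mul_comm]

theorem ClassicalMS.eq_add_one_of_eq_zero_between {γ : ℕ → ℝ} (hγ : ClassicalMS γ) {m k : ℕ}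
    (hm : γ m ≠ 0) (hk : γ k ≠ 0) (hmk : m < k) (hgap : ∀ j, m < j → j < k → γ j = 0) :
    k = m + 1 := by
  by_contra hne
  obtain ⟨d, rfl⟩ : ∃ d, k = m + d := ⟨k - m, by omega⟩
  have hd : 2 ≤ d := by omega
  set t := γ (m + d) / γ m
  set r : ℝ[X] := (X + C 1) ^ (d - 1) * (X + C t)
  have hr : r.Monic := ((monic_X_add_C 1).pow _).mul (monic_X_add_C t)
  have hrdeg : r.natDegree = d := by
    rw [(monic_X_add_C 1).pow _ |>.natDegree_mul (monic_X_add_C t), natDegree_pow,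
      natDegree_X_add_C, natDegree_X_add_C]
    omega
  have hrreal : RealRooted (X ^ m * r) :=
    (realRooted_X.pow m).mul (((realRooted_X_add_C 1).pow _).mul (realRooted_X_add_C t))
  refine not_realRooted_C_mul_X_pow_mul_one_add_X_pow hk m hd
    (hγ.realRooted_of_coeff_eq hrreal fun j => ?_)
  rw [mul_comm (C _), mul_assoc, coeff_X_pow_mul', coeff_X_pow_mul']
  split_ifs with hj
  swap
  · rw [mul_zero]
  obtain ⟨i, rfl⟩ := Nat.exists_eq_add_of_le hj
  rw [Nat.add_sub_cancel_left, coeff_C_mul, coeff_add, coeff_one, coeff_X_pow]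
  rcases Nat.lt_trichotomy i d with hi | rfl | hi
  · rcases i.eq_zero_or_pos with rfl | hi0
    · simp [r, t, coeff_zero_eq_eval_zero, hi.ne, mul_div_cancel₀ _ hm]
    · rw [hgap (m + i) (by omega) (by omega)]
      simp [hi0.ne', hi.ne]
  · simp [← hrdeg, hr.coeff_natDegree, show r.natDegree ≠ 0 by omega]
  · simp [coeff_eq_zero_of_natDegree_lt (hrdeg ▸ hi), hi.ne', show i ≠ 0 by omega]

theorem stmt_9 (γ : ℕ → ℝ) (hγ : ClassicalMS γ) (m n : ℕ) (hmn : m < n)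
    (hm : γ m ≠ 0) (hn : γ n = 0) :
    ∀ k : ℕ, n ≤ k → γ k = 0 := by
  classical
  by_contra! hex
  obtain ⟨hnk₀, hk₀⟩ := Nat.find_spec hex
  set k₀ := Nat.find hex
  set m₀ := Nat.findGreatest (fun j => γ j ≠ 0) n
  have hm₀ : γ m₀ ≠ 0 := Nat.findGreatest_spec (P := fun j => γ j ≠ 0) hmn.le hm
  have hm₀n : m₀ < n :=
    (Nat.findGreatest_le n).lt_of_ne (ne_of_apply_ne γ (ne_of_ne_of_eq hm₀ hn.symm))
  have hk₀n : k₀ ≠ n := ne_of_apply_ne γ (ne_of_ne_of_eq hk₀ hn.symm)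
  have hgap : ∀ j, m₀ < j → j < k₀ → γ j = 0 := fun j hmj hjk => by
    by_contra hj
    rcases le_or_gt j n with hjn | hjn
    · exact Nat.findGreatest_is_greatest hmj hjn hj
    · exact Nat.find_min hex hjk ⟨hjn.le, hj⟩
  have := hγ.eq_add_one_of_eq_zero_between hm₀ hk₀ (by omega) hgap
  omega
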